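/- arXiv:0704.3494 — 5 statements merged into one kernel-verified Lean document; each statement's English description precedes it below -/
import Mathlib

section
/- For every X ∈ Mₙ(ℂ), the matrix exponential exp : Mₙ(ℂ) → Mₙ(ℂ) is Fréchet differentiable at X, and its derivative is the linear map Y ↦ (Σ_{k=0}^{∞} (ad X)^k(Y) / (k+1)!) · exp(X), where ad X (Y) := XY − YX; in other words, d exp_X(Y) = Φ(ad X)(Y) · e^X, where Φ(t) = (e^t − 1)/t. -/
/- STATEMENT 1: The matrix exponential exp : Mₙ(ℂ) → Mₙ(ℂ) is Fréchet differentiable at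
every X, with derivative Y ↦ (Σ_{k=0}^∞ (ad X)^k(Y)/(k+1)!) · exp(X) = Φ(ad X)(Y)·e^X,
where Φ(t) = (e^t−1)/t and ad X (Y) = XY − YX. -/

attribute [local instance] Matrix.linftyOpNormedRing Matrix.linftyOpNormedAlgebra

/-- The operator `ad X : Y ↦ XY − YX` on `Mₙ(ℂ)`, as a continuous linear map. -/
noncomputable def adCLM (n : ℕ) (X : Matrix (Fin n) (Fin n) ℂ) :
    Matrix (Fin n) (Fin n) ℂ →L[ℂ] Matrix (Fin n) (Fin n) ℂ :=
  ContinuousLinearMap.mul ℂ (Matrix (Fin n) (Fin n) ℂ) X -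
    (ContinuousLinearMap.mul ℂ (Matrix (Fin n) (Fin n) ℂ)).flip X

/-- Right multiplication `Y ↦ Y * A` on `Mₙ(ℂ)`, as a continuous linear map. -/
noncomputable def mulRightCLM (n : ℕ) (A : Matrix (Fin n) (Fin n) ℂ) :
    Matrix (Fin n) (Fin n) ℂ →L[ℂ] Matrix (Fin n) (Fin n) ℂ :=
  (ContinuousLinearMap.mul ℂ (Matrix (Fin n) (Fin n) ℂ)).flip A

/-!
Let `L` and `R` be left and right multiplication by `x`; they commute and `ad x = L - R`.
Differentiating the exponential series term by term gives the derivative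
`∑ₘ (1/m!) ∑_{i<m} L^(m-1-i) R^i`. For commuting `a`, `b`, the Cauchy product of `exp b` with
`Φ(a - b) = ∑ₖ (a - b)^k/(k+1)!` is `∑ₘ (1/m!) ∑_{i<m} a^(m-1-i) b^i`, by the binomial theorem
applied to `a = b + (a - b)`. Finally `exp R` is right multiplication by `exp x`.
-/

open Finset NormedSpace ContinuousLinearMap
open scoped Nat

/- Both sides are `((b + c) ^ (m + 1) - b ^ (m + 1)) / c`, written so that no division occurs. -/
theorem Commute.sum_range_add_pow_mul_pow {R : Type*} [Semiring R] {b c : R} (h : Commute b c)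
    (m : ℕ) :
    ∑ i ∈ range (m + 1), (b + c) ^ (m - i) * b ^ i =
      ∑ k ∈ range (m + 1), (m + 1).choose k • (b ^ k * c ^ (m - k)) := by
  induction m with
  | zero => simp
  | succ m ih =>
    have hlhs : ∑ i ∈ range (m + 2), (b + c) ^ (m + 1 - i) * b ^ i
        = (∑ i ∈ range (m + 1), (b + c) ^ (m - i) * b ^ i) * b + (b + c) ^ (m + 1) := by
      simp [sum_range_succ' _ (m + 1), sum_mul, pow_succ, mul_assoc]
    have hrhs : ∑ k ∈ range (m + 2), (m + 2).choose k • (b ^ k * c ^ (m + 1 - k))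
        = (∑ k ∈ range (m + 1), (m + 1).choose k • (b ^ k * c ^ (m - k))) * b
          + ∑ k ∈ range (m + 2), (m + 1).choose k • (b ^ k * c ^ (m + 1 - k)) := by
      rw [sum_range_succ' _ (m + 1), sum_range_succ' (fun k => (m + 1).choose k • _) (m + 1)]
      simp only [Nat.choose_succ_succ' (m + 1), add_smul, sum_add_distrib, sum_mul,
        Nat.choose_zero_right, add_assoc]
      congr 1
      refine sum_congr rfl fun k _ => ?_
      rw [smul_mul_assoc, Nat.add_sub_add_right, pow_succ, mul_assoc, mul_assoc,
        (h.pow_right (m - k)).eq]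
    rw [hlhs, hrhs, ih, h.add_pow]
    simp only [nsmul_eq_mul']

theorem inv_factorial_succ_mul_choose {K : Type*} [Field K] [CharZero K] {m k : ℕ} (hk : k ≤ m) :
    ((m + 1)! : K)⁻¹ * (m + 1).choose k = (k ! : K)⁻¹ * ((m - k + 1)! : K)⁻¹ := by
  rw [Nat.cast_choose K (by omega : k ≤ m + 1), show m + 1 - k = m - k + 1 by omega]
  have : ((m + 1)! : K) ≠ 0 := Nat.cast_ne_zero.mpr (Nat.factorial_ne_zero _)
  field_simp

section OperatorNorm
variable {𝕜 E : Type*} [NontriviallyNormedField 𝕜] [NormedAddCommGroup E] [NormedSpace 𝕜 E]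

/- Unlike in a general normed ring, `‖1‖ ≤ 1` here, so the case `n = 0` holds too. -/
theorem ContinuousLinearMap.opNorm_pow_le (f : E →L[𝕜] E) (n : ℕ) : ‖f ^ n‖ ≤ ‖f‖ ^ n := by
  rcases n.eq_zero_or_pos with rfl | hn
  · rw [pow_zero, pow_zero]
    exact norm_id_le
  · exact norm_pow_le' f hn

theorem ContinuousLinearMap.norm_sum_pow_mul_pow_le {f g : E →L[𝕜] E} {r : ℝ} (hf : ‖f‖ ≤ r)
    (hg : ‖g‖ ≤ r) (m : ℕ) : ‖∑ i ∈ range m, f ^ (m - 1 - i) * g ^ i‖ ≤ m * r ^ (m - 1) := by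
  have hr : 0 ≤ r := (norm_nonneg f).trans hf
  have hterm : ∀ i ∈ range m, ‖f ^ (m - 1 - i) * g ^ i‖ ≤ r ^ (m - 1) := fun i hi =>
    calc ‖f ^ (m - 1 - i) * g ^ i‖ ≤ ‖f‖ ^ (m - 1 - i) * ‖g‖ ^ i :=
          (norm_mul_le _ _).trans (by gcongr <;> exact opNorm_pow_le _ _)
      _ ≤ r ^ (m - 1 - i) * r ^ i := by gcongr
      _ = r ^ (m - 1) := by rw [← pow_add, Nat.sub_add_cancel (by simp at hi; omega)]
  simpa using norm_sum_le_of_le _ hterm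

end OperatorNorm

section MulLeftRight
variable {𝕜 𝔸 : Type*} [NontriviallyNormedField 𝕜] [NormedRing 𝔸] [NormedAlgebra 𝕜 𝔸]

theorem ContinuousLinearMap.mul_apply_pow (x : 𝔸) (n : ℕ) : mul 𝕜 𝔸 (x ^ n) = mul 𝕜 𝔸 x ^ n := by
  induction n with
  | zero => ext; simp
  | succ n ih => ext y; simp [pow_succ, ← ih, mul_assoc]

theorem ContinuousLinearMap.flip_mul_apply_pow (x : 𝔸) (n : ℕ) :
    (mul 𝕜 𝔸).flip (x ^ n) = (mul 𝕜 𝔸).flip x ^ n := by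
  induction n with
  | zero => ext; simp
  | succ n ih =>
    rw [pow_succ' ((mul 𝕜 𝔸).flip x), ← ih]
    ext y
    simp [pow_succ, mul_assoc]

theorem ContinuousLinearMap.commute_mul_flip_mul (x : 𝔸) :
    Commute (mul 𝕜 𝔸 x) ((mul 𝕜 𝔸).flip x) := by
  ext y
  simp [mul_assoc]

theorem ContinuousLinearMap.opNorm_flip_mul_apply_le (x : 𝔸) : ‖(mul 𝕜 𝔸).flip x‖ ≤ ‖x‖ :=
  ((mul 𝕜 𝔸).flip.le_opNorm x).trans <| by
    simpa [opNorm_flip] using mul_le_mul_of_nonneg_right (opNorm_mul_le 𝕜 𝔸) (norm_nonneg x)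

theorem hasFDerivAt_pow_eq_sum_mul_pow (m : ℕ) (x : 𝔸) :
    HasFDerivAt (fun y : 𝔸 => y ^ m)
      (∑ i ∈ range m, mul 𝕜 𝔸 x ^ (m - 1 - i) * (mul 𝕜 𝔸).flip x ^ i) x := by
  refine (hasFDerivAt_pow' m).congr_fderiv (sum_congr rfl fun i _ => ?_)
  rw [← mul_apply_pow, ← flip_mul_apply_pow, Nat.pred_eq_sub_one]
  ext y
  simp [mul_assoc]

end MulLeftRight

section BanachAlgebra
variable {𝕂 𝔸 : Type*} [RCLike 𝕂] [NormedRing 𝔸] [NormedAlgebra 𝕂 𝔸]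

theorem summable_norm_inv_factorial_succ_smul_pow (x : 𝔸) :
    Summable fun k : ℕ => ‖((k + 1)! : 𝕂)⁻¹ • x ^ k‖ := by
  refine (norm_expSeries_summable' (𝕂 := 𝕂) x).of_nonneg_of_le (fun _ => norm_nonneg _)
    fun k => ?_
  rw [norm_smul, norm_smul, norm_inv, norm_inv, RCLike.norm_natCast, RCLike.norm_natCast]
  gcongr
  exact k.le_succ

variable [CompleteSpace 𝔸]

theorem Commute.hasSum_inv_factorial_smul_sum_pow_mul_pow {a b : 𝔸} (h : Commute a b) :
    HasSum (fun m : ℕ => (m !⁻¹ : 𝕂) • ∑ i ∈ range m, a ^ (m - 1 - i) * b ^ i)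
      (NormedSpace.exp b * ∑' k : ℕ, ((k + 1)! : 𝕂)⁻¹ • (a - b) ^ k) := by
  obtain ⟨c, rfl⟩ : ∃ c, a = b + c := ⟨a - b, by abel⟩
  have hbc : Commute b c := by simpa using h.symm.sub_right (Commute.refl b)
  have hterm (m : ℕ) : (((m + 1)! : 𝕂)⁻¹) • ∑ i ∈ range (m + 1), (b + c) ^ (m - i) * b ^ i
      = ∑ k ∈ range (m + 1), (k !⁻¹ : 𝕂) • b ^ k * (((m - k + 1)! : 𝕂)⁻¹ • c ^ (m - k)) := by
    simp only [hbc.sum_range_add_pow_mul_pow, smul_sum, ← Nat.cast_smul_eq_nsmul 𝕂, smul_smul]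
    refine sum_congr rfl fun k hk => ?_
    rw [inv_factorial_succ_mul_choose (by simp at hk; omega), smul_mul_smul_comm]
  have hcauchy := hasSum_sum_range_mul_of_summable_norm (norm_expSeries_summable' (𝕂 := 𝕂) b)
    (summable_norm_inv_factorial_succ_smul_pow (𝕂 := 𝕂) c)
  rw [← congrFun (exp_eq_tsum 𝕂) b] at hcauchy
  rw [add_sub_cancel_left, ← hasSum_nat_add_iff' 1]
  simpa only [sum_range_one, range_zero, sum_empty, smul_zero, sub_zero, Nat.add_sub_cancel,
    hterm] using hcauchy

theorem ContinuousLinearMap.flip_mul_apply_exp (x : 𝔸) :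
    (mul 𝕂 𝔸).flip (NormedSpace.exp x) = NormedSpace.exp ((mul 𝕂 𝔸).flip x) := by
  have h := (exp_series_hasSum_exp' (𝕂 := 𝕂) x).mapL (mul 𝕂 𝔸).flip
  simp only [map_smul, flip_mul_apply_pow] at h
  exact h.unique (exp_series_hasSum_exp' _)

theorem hasFDerivAt_exp_eq_tsum (x : 𝔸) :
    HasFDerivAt NormedSpace.exp (∑' m : ℕ, (m !⁻¹ : 𝕂) •
      ∑ i ∈ range m, mul 𝕂 𝔸 x ^ (m - 1 - i) * (mul 𝕂 𝔸).flip x ^ i) x := by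
  set r := ‖x‖ + 1
  have hbound (m : ℕ) (y : 𝔸) (hy : y ∈ Metric.ball 0 r) :
      ‖(m !⁻¹ : 𝕂) • ∑ i ∈ range m, mul 𝕂 𝔸 y ^ (m - 1 - i) * (mul 𝕂 𝔸).flip y ^ i‖
        ≤ r ^ (m - 1) / (m - 1)! := by
    have hyr : ‖y‖ ≤ r := (mem_ball_zero_iff.mp hy).le
    rw [norm_smul, norm_inv, RCLike.norm_natCast]
    calc _ ≤ (m ! : ℝ)⁻¹ * (m * r ^ (m - 1)) := by
          gcongr
          exact norm_sum_pow_mul_pow_le ((opNorm_mul_apply_le 𝕂 𝔸 y).trans hyr)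
            ((opNorm_flip_mul_apply_le y).trans hyr) m
      _ ≤ r ^ (m - 1) / (m - 1)! := by
          rcases m with _ | m
          · simp
          · rw [Nat.factorial_succ, Nat.cast_mul, Nat.add_sub_cancel]
            field_simp
            rfl
  let _ : NormedSpace ℝ 𝔸 := NormedSpace.restrictScalars ℝ 𝕂 𝔸
  rw [exp_eq_tsum 𝕂]
  exact hasFDerivAt_tsum_of_isPreconnected
    ((summable_nat_add_iff 1).mp (by simpa using Real.summable_pow_div_factorial r))
    Metric.isOpen_ball (convex_ball 0 r).isPreconnected
    (fun m y _ => (hasFDerivAt_pow_eq_sum_mul_pow m y).const_smul _) hbound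
    (Metric.mem_ball_self (by positivity)) (expSeries_summable' 0)
    (mem_ball_zero_iff.mpr (lt_add_one _))

theorem hasFDerivAt_exp_ad (x : 𝔸) :
    HasFDerivAt NormedSpace.exp ((mul 𝕂 𝔸).flip (NormedSpace.exp x) ∘L
      ∑' k : ℕ, ((k + 1)! : 𝕂)⁻¹ • (mul 𝕂 𝔸 x - (mul 𝕂 𝔸).flip x) ^ k) x := by
  rw [flip_mul_apply_exp, ← ContinuousLinearMap.mul_def,
    ← ((commute_mul_flip_mul x).hasSum_inv_factorial_smul_sum_pow_mul_pow (𝕂 := 𝕂)).tsum_eq]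
  exact hasFDerivAt_exp_eq_tsum x

end BanachAlgebra

theorem exp_matrix_hasFDerivAt (n : ℕ) (X : Matrix (Fin n) (Fin n) ℂ) :
    HasFDerivAt NormedSpace.exp
      ((mulRightCLM n (NormedSpace.exp X)).comp
        (∑' k : ℕ, (((k + 1).factorial : ℂ))⁻¹ • adCLM n X ^ k))
      X :=
  hasFDerivAt_exp_ad X
end

section
/- Let x, y ∈ Mₙ(ℂ), i ∈ ℂⁿ and j ∈ (ℂⁿ)^*. Assume that xy − yx + i⊗j = 0 and that y is nilpotent. Then there exists a complete flag 0 = V₀ ⊆ V₁ ⊆ ⋯ ⊆ Vₙ = ℂⁿ in ℂⁿ such that x V_k ⊆ V_k and y V_k ⊆ V_{k−1} for all k = 1, …, n. (This is the nil-flag description of the Lagrangian nil-cone 𝕄_nil(𝔸¹) = {(x,y,i,j) : [x,y] + i⊗j = 0, y nilpotent}, Lemma 4.6(i).) -/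
/-!
Over an algebraically closed field, endomorphisms `x, y` with `y` nilpotent and `⁅x, y⁆` of
rank at most one have a common eigenvector in `ker y`. If `ker y` is `x`-stable, take an
eigenvector of `x` there. Otherwise some `w ∈ ker y` has `⁅x, y⁆ w = -y (x w) ≠ 0`, so the
rank-one map `⁅x, y⁆` takes values in `range y`; then `range y` is a proper nonzero subspace
stable under `x` and `y`, and we recurse into it. Both hypotheses pass to the quotient by the
line through such a vector, so induction on the dimension builds the flag.
-/

open Matrix Module LinearMap

variable {K M N : Type*} [Field K] [AddCommGroup M] [Module K M] [AddCommGroup N] [Module K N]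

theorem LinearMap.finrank_comap_of_surjective [FiniteDimensional K M] {f : M →ₗ[K] N}
    (hf : Function.Surjective f) (W : Submodule K N) :
    finrank K (W.comap f) = finrank K W + finrank K (ker f) := by
  have h := finrank_range_add_finrank_ker (f.domRestrict (W.comap f))
  rwa [range_domRestrict, Submodule.map_comap_eq_of_surjective hf, ker_domRestrict,
    (Submodule.comapSubtypeEquivOfLe (ker_le_comap f)).finrank_eq, eq_comm] at h

section RankOfCommutator

variable [FiniteDimensional K M]

theorem LinearMap.finrank_range_restrict_le {f : Module.End K M} {p : Submodule K M}
    (hf : Set.MapsTo f p p) : finrank K (range (f.restrict hf)) ≤ finrank K (range f) := by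
  rw [← p.finrank_map_subtype_eq, ← range_comp]
  exact Submodule.finrank_mono (by rintro _ ⟨u, rfl⟩; exact mem_range_self f u)

theorem LinearMap.finrank_range_lie_restrict_le {x y : Module.End K M} {p : Submodule K M}
    (hx : Set.MapsTo x p p) (hy : Set.MapsTo y p p) :
    finrank K (range ⁅x.restrict hx, y.restrict hy⁆) ≤ finrank K (range ⁅x, y⁆) := by
  have hxy : Set.MapsTo (⁅x, y⁆ : Module.End K M) p p := fun u hu => by
    simpa [Ring.lie_def] using sub_mem (hx (hy hu)) (hy (hx hu))
  have : ⁅x.restrict hx, y.restrict hy⁆ = ⁅x, y⁆.restrict hxy := by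
    ext; rfl
  exact this ▸ finrank_range_restrict_le hxy

theorem Submodule.finrank_range_mapQ_le {f : Module.End K M} {p : Submodule K M}
    (hf : p ≤ p.comap f) : finrank K (range (p.mapQ p f hf)) ≤ finrank K (range f) := by
  rw [← range_comp_of_range_eq_top _ (p.range_mkQ), mapQ_mkQ, range_comp]
  exact finrank_map_le _ _

theorem Submodule.finrank_range_lie_mapQ_le {x y : Module.End K M} {p : Submodule K M}
    (hx : p ≤ p.comap x) (hy : p ≤ p.comap y) :
    finrank K (range ⁅p.mapQ p x hx, p.mapQ p y hy⁆) ≤ finrank K (range ⁅x, y⁆) := by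
  have hxy : p ≤ p.comap ⁅x, y⁆ := fun u hu => by
    have hxyu : x (y u) ∈ p := hx (hy hu)
    have hyxu : y (x u) ∈ p := hy (hx hu)
    simpa [Ring.lie_def] using sub_mem hxyu hyxu
  have : ⁅p.mapQ p x hx, p.mapQ p y hy⁆ = p.mapQ p ⁅x, y⁆ hxy := by
    ext; simp [Ring.lie_def]
  exact this ▸ finrank_range_mapQ_le hxy

end RankOfCommutator

theorem Module.End.mapsTo_range_of_finrank_range_lie_le_one [FiniteDimensional K M]
    {x y : Module.End K M} (hxy : finrank K (range ⁅x, y⁆) ≤ 1) {w : M} (hw : y w = 0)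
    (hxw : y (x w) ≠ 0) : Set.MapsTo x (range y) (range y) := by
  have hlie_w : ⁅x, y⁆ w = -y (x w) := by simp [Ring.lie_def, hw]
  have hlie : range ⁅x, y⁆ ≤ range y := by
    have hspan : K ∙ ⁅x, y⁆ w = range ⁅x, y⁆ := Submodule.eq_of_le_of_finrank_le
      ((Submodule.span_singleton_le_iff_mem _ _).mpr (mem_range_self _ w))
      (by rwa [finrank_span_singleton (by simpa [hlie_w] using hxw)])
    rw [← hspan, Submodule.span_singleton_le_iff_mem, hlie_w, ← map_neg]
    exact mem_range_self y _
  rintro _ ⟨t, rfl⟩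
  have : x (y t) = y (x t) + ⁅x, y⁆ t := by simp [Ring.lie_def]
  exact this ▸ add_mem (mem_range_self y _) (hlie (mem_range_self _ t))

theorem Module.End.exists_eigenvector_mem_ker_of_finrank_range_lie_le_one [IsAlgClosed K]
    [FiniteDimensional K M] [Nontrivial M] {x y : Module.End K M}
    (hxy : finrank K (range ⁅x, y⁆) ≤ 1) (hy : IsNilpotent y) :
    ∃ v ≠ 0, y v = 0 ∧ ∃ c : K, x v = c • v := by
  induction h : finrank K M using Nat.strong_induction_on generalizing M with
  | _ n ih =>
  by_cases hker : Set.MapsTo x (ker y) (ker y)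
  · have : Nontrivial (ker y) := Submodule.nontrivial_iff_ne_bot.mpr fun h =>
      hy.not_isUnit ((isUnit_iff_ker_eq_bot y).mpr h)
    obtain ⟨c, hc⟩ := Module.End.exists_eigenvalue (x.restrict hker)
    obtain ⟨⟨v, hv⟩, hev⟩ := hc.exists_hasEigenvector
    exact ⟨v, by simpa using hev.2, hv, c, congrArg Subtype.val hev.apply_eq_smul⟩
  simp only [Set.MapsTo, SetLike.mem_coe, mem_ker, not_forall] at hker
  obtain ⟨w, hw, hxw⟩ := hker
  have hxS := mapsTo_range_of_finrank_range_lie_le_one hxy hw hxw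
  have hyS : Set.MapsTo y (range y) (range y) := fun u _ => mem_range_self y u
  have : Nontrivial (range y) :=
    ⟨⟨⟨y (x w), mem_range_self y _⟩, 0, by simpa using hxw⟩⟩
  have hlt : finrank K (range y) < n :=
    h ▸ Submodule.finrank_lt fun h => hy.not_isUnit ((isUnit_iff_range_eq_top y).mpr h)
  obtain ⟨⟨v, hvS⟩, hv0, hyv, c, hxv⟩ := ih _ hlt
    ((finrank_range_lie_restrict_le hxS hyS).trans hxy) (Module.End.isNilpotent.restrict hyS hy)
    rfl
  exact ⟨v, by simpa using hv0, congrArg Subtype.val hyv, c, congrArg Subtype.val hxv⟩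

structure IsNilFlag (x y : Module.End K M) (n : ℕ) (V : ℕ → Submodule K M) : Prop where
  bot : V 0 = ⊥
  top : V n = ⊤
  mono : ∀ k < n, V k ≤ V (k + 1)
  finrank_eq : ∀ k ≤ n, finrank K (V k) = k
  mapsTo_x : ∀ k ≤ n, Set.MapsTo x (V k) (V k)
  mapsTo_y : ∀ k < n, Set.MapsTo y (V (k + 1)) (V k)

def liftFlag (L : Submodule K M) (W : ℕ → Submodule K (M ⧸ L)) : ℕ → Submodule K M
  | 0 => ⊥
  | m + 1 => (W m).comap L.mkQ

theorem IsNilFlag.lift [FiniteDimensional K M] {x y : Module.End K M} {L : Submodule K M}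
    (hL : finrank K L = 1) {hxL : L ≤ L.comap x} {hyL : L ≤ L.comap y} (hyL_ker : L ≤ ker y)
    {n : ℕ} {W : ℕ → Submodule K (M ⧸ L)}
    (hW : IsNilFlag (L.mapQ L x hxL) (L.mapQ L y hyL) n W) :
    IsNilFlag x y (n + 1) (liftFlag L W) where
  bot := rfl
  top := by simp [liftFlag, hW.top]
  mono
    | 0, _ => bot_le
    | m + 1, hm => Submodule.comap_mono (hW.mono m (by omega))
  finrank_eq
    | 0, _ => finrank_bot K M
    | m + 1, hm => by
      rw [liftFlag, finrank_comap_of_surjective L.mkQ_surjective, Submodule.ker_mkQ, hL,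
        hW.finrank_eq m (by omega)]
  mapsTo_x
    | 0, _ => fun u hu => by simp_all [liftFlag]
    | m + 1, hm => fun _ hu => hW.mapsTo_x m (by omega) hu
  mapsTo_y
    | 0, _ => fun u hu => by
      have huL : u ∈ L := by simpa [liftFlag, hW.bot] using hu
      simp [liftFlag, mem_ker.mp (hyL_ker huL)]
    | m + 1, hm => fun _ hu => hW.mapsTo_y m (by omega) hu

theorem exists_isNilFlag_of_finrank_range_lie_le_one [IsAlgClosed K] [FiniteDimensional K M]
    {x y : Module.End K M} (hxy : finrank K (range ⁅x, y⁆) ≤ 1) (hy : IsNilpotent y) :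
    ∃ V, IsNilFlag x y (finrank K M) V := by
  induction h : finrank K M generalizing M with
  | zero =>
    have : Subsingleton M := (finrank_zero_iff (R := K)).mp h
    exact ⟨fun _ => ⊥, rfl, Subsingleton.elim _ _, fun _ _ => le_rfl,
      fun k hk => by simp [Nat.le_zero.mp hk], fun _ _ u hu => by simp_all, fun _ hk => by omega⟩
  | succ n ih =>
    have : Nontrivial M := (finrank_pos_iff (R := K)).mp (by omega)
    obtain ⟨v, hv0, hyv, c, hxv⟩ :=
      Module.End.exists_eigenvector_mem_ker_of_finrank_range_lie_le_one hxy hy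
    have hL : finrank K (K ∙ v) = 1 := finrank_span_singleton hv0
    have hxL : K ∙ v ≤ (K ∙ v).comap x := by
      simpa [Submodule.span_singleton_le_iff_mem, hxv] using
        Submodule.smul_mem _ c (Submodule.mem_span_singleton_self v)
    have hyL_ker : K ∙ v ≤ ker y := by simp [Submodule.span_singleton_le_iff_mem, hyv]
    have hyL : K ∙ v ≤ (K ∙ v).comap y := hyL_ker.trans fun u hu => by simp [mem_ker.mp hu]
    obtain ⟨W, hW⟩ := ih ((Submodule.finrank_range_lie_mapQ_le hxL hyL).trans hxy)
      (Module.End.IsNilpotent.mapQ hyL hy)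
      (by have := (K ∙ v).finrank_quotient_add_finrank; omega)
    exact ⟨_, hW.lift hL hyL_ker⟩

theorem nil_flag_exists_additive (n : ℕ) (x y : Matrix (Fin n) (Fin n) ℂ)
    (i : Fin n → ℂ) (j : Module.Dual ℂ (Fin n → ℂ))
    (hmom : x * y - y * x + Matrix.vecMulVec i (fun b => j (Pi.single b 1)) = 0)
    (hnil : IsNilpotent y) :
    ∃ V : ℕ → Submodule ℂ (Fin n → ℂ),
      V 0 = ⊥ ∧ V n = ⊤ ∧
      (∀ k, k < n → V k ≤ V (k + 1)) ∧
      (∀ k, k ≤ n → Module.finrank ℂ (V k) = k) ∧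
      (∀ k, 1 ≤ k → k ≤ n →
        (∀ u ∈ V k, x.mulVec u ∈ V k) ∧ (∀ u ∈ V k, y.mulVec u ∈ V (k - 1))) := by
  have hlie : ⁅toLin' x, toLin' y⁆ = -toLin' (vecMulVec i (fun b => j (Pi.single b 1))) := by
    rw [Ring.lie_def, Module.End.mul_eq_comp, Module.End.mul_eq_comp, ← toLin'_mul,
      ← toLin'_mul, ← map_sub, ← map_neg, eq_neg_of_add_eq_zero_left hmom]
  have hrange : range ⁅toLin' x, toLin' y⁆ ≤ ℂ ∙ i := by
    rintro _ ⟨u, rfl⟩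
    simp [hlie, vecMulVec_mulVec, Submodule.mem_span_singleton]
  have hrank : finrank ℂ (range ⁅toLin' x, toLin' y⁆) ≤ 1 :=
    (Submodule.finrank_mono hrange).trans ((finrank_span_le_card ({i} : Set _)).trans (by simp))
  obtain ⟨V, hV⟩ :=
    exists_isNilFlag_of_finrank_range_lie_le_one hrank ((isNilpotent_toLin'_iff y).mpr hnil)
  rw [finrank_fin_fun] at hV
  refine ⟨V, hV.bot, hV.top, hV.mono, hV.finrank_eq, fun k hk₁ hk₂ =>
    ⟨fun u hu => hV.mapsTo_x k hk₂ hu, fun u hu => ?_⟩⟩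
  obtain ⟨m, rfl⟩ := Nat.exists_eq_add_of_le' hk₁
  exact hV.mapsTo_y m (by omega) hu
end

section
/- Let x ∈ GLₙ(ℂ), y ∈ Mₙ(ℂ), i ∈ ℂⁿ and j ∈ (ℂⁿ)^*. Assume that x y x⁻¹ − y + i⊗j = 0 and that y is nilpotent. Then there exists a complete flag 0 = V₀ ⊆ V₁ ⊆ ⋯ ⊆ Vₙ = ℂⁿ in ℂⁿ such that x V_k = V_k and y V_k ⊆ V_{k−1} for all k = 1, …, n. (This is the nil-flag description of the Lagrangian nil-cone 𝕄_nil(ℂ^×) in the trigonometric case, Lemma 4.6(ii).) -/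
open Matrix Module Module.End LinearMap Submodule

/-! The relation says that `x * y - y * x = -(i ⊗ j) * x` maps into the line `ℂ ∙ i`. For a pair
`f`, `g` with this property and `g` nilpotent, a minimal nonzero subspace `S`
invariant under both is killed by `g`: if `i ∈ g S`, then `g S` is invariant and, `g` being
nilpotent, strictly smaller than `S`, so it is `0`; otherwise `S ⊓ ker g` is invariant and
nonzero, so it is `S`. An eigenvector of `f` in `S` spans a line invariant under `f` and killed by
`g`. The hypotheses pass to the quotient by an invariant subspace, so the line can be extended one
dimension at a time to the flag. -/

section

variable {K V : Type*} [Field K] [AddCommGroup V] [Module K V] [FiniteDimensional K V]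
  {f g : End K V} {i : V} {S : Submodule K V}

theorem Module.End.IsNilpotent.not_disjoint_ker (hg : IsNilpotent g) (hS : S ∈ g.invtSubmodule)
    (hS0 : S ≠ ⊥) : ¬ Disjoint S (ker g) := by
  have : Nontrivial S := nontrivial_iff_ne_bot.mpr hS0
  rw [← injective_restrict_iff hS, ← ker_eq_bot, ← isUnit_iff_ker_eq_bot]
  exact (isNilpotent.restrict hS hg).not_isUnit

theorem Module.End.IsNilpotent.map_ne_self (hg : IsNilpotent g) (hS : S ∈ g.invtSubmodule)
    (hS0 : S ≠ ⊥) : S.map g ≠ S := by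
  have : Nontrivial S := nontrivial_iff_ne_bot.mpr hS0
  intro hgS
  have hS' : ∀ v ∈ S, g v ∈ S := hS
  apply (isNilpotent.restrict hS' hg).not_isUnit
  rw [isUnit_iff_range_eq_top, range_restrict, hgS, comap_subtype_self]

theorem Submodule.map_eq_of_mem_invtSubmodule (hf : Function.Injective f)
    (hS : S ∈ f.invtSubmodule) : S.map f = S :=
  eq_of_le_of_finrank_eq ((mem_invtSubmodule_iff_map_le f).mp hS)
    (equivMapOfInjective f hf S).finrank_eq.symm

theorem le_ker_of_minimal_invtSubmodule (hg : IsNilpotent g)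
    (hfg : ∀ v, f (g v) - g (f v) ∈ K ∙ i)
    (hS : Minimal (fun S ↦ S ≠ ⊥ ∧ S ∈ f.invtSubmodule ∧ S ∈ g.invtSubmodule) S) :
    S ≤ ker g := by
  obtain ⟨hS0, hSf, hSg⟩ := hS.prop
  have hgS_le : S.map g ≤ S := (mem_invtSubmodule_iff_map_le g).mp hSg
  by_cases hi : i ∈ S.map g
  · have hgSf : S.map g ∈ f.invtSubmodule := by
      rintro _ ⟨u, hu, rfl⟩
      rw [mem_comap, ← sub_add_cancel (f (g u)) (g (f u))]
      exact add_mem ((span_singleton_le_iff_mem _ _).mpr hi (hfg u)) (mem_map_of_mem (hSf hu))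
    have hgSg : S.map g ∈ g.invtSubmodule :=
      (mem_invtSubmodule_iff_map_le g).mpr (map_mono hgS_le)
    by_contra hker
    have hgS0 : S.map g ≠ ⊥ := by rwa [Ne, ← le_ker_iff_map]
    exact hg.map_ne_self hSg hS0 (le_antisymm hgS_le (hS.2 ⟨hgS0, hgSf, hgSg⟩ hgS_le))
  · have hKf : S ⊓ ker g ∈ f.invtSubmodule := by
      rintro u ⟨hu, hgu : g u = 0⟩
      refine ⟨hSf hu, ?_⟩
      have hgfu : g (f u) = -(f (g u) - g (f u)) := by simp [hgu]
      exact disjoint_def.mp (disjoint_span_singleton_of_notMem hi) _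
        (mem_map_of_mem (hSf hu)) (hgfu ▸ neg_mem (hfg u))
    have hKg : S ⊓ ker g ∈ g.invtSubmodule := by
      rintro u ⟨-, hgu : g u = 0⟩
      simp [hgu]
    have hK0 : S ⊓ ker g ≠ ⊥ := by
      rw [Ne, ← disjoint_iff]
      exact hg.not_disjoint_ker hSg hS0
    exact le_inf_iff.mp (hS.2 ⟨hK0, hKf, hKg⟩ inf_le_left) |>.2

variable [IsAlgClosed K]

theorem exists_hasEigenvector_mem_ker [Nontrivial V] (hg : IsNilpotent g)
    (hfg : ∀ v, f (g v) - g (f v) ∈ K ∙ i) : ∃ c v, f.HasEigenvector c v ∧ g v = 0 := by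
  obtain ⟨S, hS⟩ := exists_minimal_of_wellFoundedLT
    (fun S : Submodule K V ↦ S ≠ ⊥ ∧ S ∈ f.invtSubmodule ∧ S ∈ g.invtSubmodule)
    ⟨⊤, top_ne_bot, invtSubmodule.top_mem f, invtSubmodule.top_mem g⟩
  have hSker := le_ker_of_minimal_invtSubmodule hg hfg hS
  obtain ⟨hS0, hSf, -⟩ := hS.prop
  have : Nontrivial S := nontrivial_iff_ne_bot.mpr hS0
  have hSf' : ∀ v ∈ S, f v ∈ S := hSf
  obtain ⟨c, hc⟩ := exists_eigenvalue (f.restrict hSf')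
  obtain ⟨v, hv⟩ := hc.exists_hasEigenvector
  refine ⟨c, v, ⟨mem_eigenspace_iff.mpr ?_, by simpa using hv.2⟩, hSker v.2⟩
  simpa using congrArg Subtype.val hv.apply_eq_smul

theorem exists_finrank_succ_invtSubmodule (hg : IsNilpotent g)
    (hfg : ∀ v, f (g v) - g (f v) ∈ K ∙ i) {P : Submodule K V} (hPf : P ∈ f.invtSubmodule)
    (hPg : P ∈ g.invtSubmodule) (hP : P ≠ ⊤) :
    ∃ P', P ≤ P' ∧ finrank K P' = finrank K P + 1 ∧ P' ∈ f.invtSubmodule ∧ P' ≤ P.comap g := by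
  rw [mem_invtSubmodule] at hPf hPg
  have : Nontrivial (V ⧸ P) := Quotient.nontrivial_iff.mpr hP
  have hfg' : ∀ q, P.mapQ P f hPf (P.mapQ P g hPg q) - P.mapQ P g hPg (P.mapQ P f hPf q) ∈
      K ∙ P.mkQ i := by
    intro q
    obtain ⟨v, rfl⟩ := P.mkQ_surjective q
    obtain ⟨a, ha⟩ := mem_span_singleton.mp (hfg v)
    exact mem_span_singleton.mpr ⟨a, by simp [← Quotient.mk_sub, ← ha]⟩
  obtain ⟨c, q, hq, hgq⟩ := exists_hasEigenvector_mem_ker (hg.mapQ hPg) hfg'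
  obtain ⟨w, rfl⟩ := P.mkQ_surjective q
  have hwP : w ∉ P := by simpa using hq.2
  have hfw : f w - c • w ∈ P := by
    simpa [← Quotient.mk_eq_zero, sub_eq_zero] using hq.apply_eq_smul
  have hgw : g w ∈ P := by simpa [← Quotient.mk_eq_zero] using hgq
  refine ⟨P ⊔ K ∙ w, le_sup_left, finrank_sup_span_singleton hwP, ?_, ?_⟩
  · refine sup_le (hPf.trans (comap_mono le_sup_left)) ?_
    rw [span_singleton_le_iff_mem, mem_comap, ← sub_add_cancel (f w) (c • w)]
    exact add_mem (mem_sup_left hfw) (mem_sup_right (smul_mem _ _ (mem_span_singleton_self w)))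
  · exact sup_le hPg ((span_singleton_le_iff_mem w _).mpr hgw)

theorem exists_flag_invtSubmodule (hg : IsNilpotent g) (hfg : ∀ v, f (g v) - g (f v) ∈ K ∙ i) :
    ∃ F : ℕ → Submodule K V, F 0 = ⊥ ∧ F (finrank K V) = ⊤ ∧ Monotone F ∧
      (∀ k ≤ finrank K V, finrank K (F k) = k) ∧ (∀ k, F k ∈ f.invtSubmodule) ∧
      ∀ k, F (k + 1) ≤ (F k).comap g := by
  let Invt := {P : Submodule K V // P ∈ f.invtSubmodule ∧ P ∈ g.invtSubmodule}
  have step : ∀ P : Invt, ∃ P' : Invt, P.1 ≤ P'.1 ∧ P'.1 ≤ P.1.comap g ∧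
      (P.1 ≠ ⊤ → finrank K P'.1 = finrank K P.1 + 1) := by
    rintro ⟨P, hPf, hPg⟩
    by_cases hP : P = ⊤
    · subst hP
      exact ⟨⟨⊤, hPf, hPg⟩, le_rfl, le_top, fun h ↦ (h rfl).elim⟩
    · obtain ⟨P', hPP', hrank, hP'f, hP'g⟩ := exists_finrank_succ_invtSubmodule hg hfg hPf hPg hP
      exact ⟨⟨P', hP'f, hP'g.trans (comap_mono hPP')⟩, hPP', hP'g, fun _ ↦ hrank⟩
  choose next hle hmapsTo hrank using step
  let F (k : ℕ) : Invt := next^[k] ⟨⊥, invtSubmodule.bot_mem f, invtSubmodule.bot_mem g⟩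
  have hF : ∀ k, F (k + 1) = next (F k) := fun k ↦ Function.iterate_succ_apply' ..
  have hFrank : ∀ k ≤ finrank K V, finrank K (F k).1 = k := by
    intro k hk
    induction k with
    | zero => exact finrank_bot K V
    | succ k ih =>
      have hFk : finrank K (F k).1 = k := ih (by omega)
      have hFk_ne : (F k).1 ≠ ⊤ := fun h ↦ by rw [h, finrank_top] at hFk; omega
      rw [hF, hrank _ hFk_ne, hFk]
  refine ⟨fun k ↦ (F k).1, rfl, eq_top_of_finrank_eq (hFrank _ le_rfl),
    monotone_nat_of_le_succ fun k ↦ hF k ▸ hle (F k), hFrank, fun k ↦ (F k).2.1,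
    fun k ↦ by simpa only [hF] using hmapsTo (F k)⟩

end

theorem Matrix.mulVec_comm_mem_span_of_conj_sub_eq_vecMulVec {ι R : Type*} [Fintype ι]
    [DecidableEq ι] [CommRing R] {x : (Matrix ι ι R)ˣ} {y : Matrix ι ι R} {i w : ι → R}
    (h : (x : Matrix ι ι R) * y * (↑x⁻¹ : Matrix ι ι R) - y + vecMulVec i w = 0) (v : ι → R) :
    x *ᵥ (y *ᵥ v) - y *ᵥ (x *ᵥ v) ∈ R ∙ i := by
  have hxy : (x : Matrix ι ι R) * y = (y - vecMulVec i w) * x := by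
    rw [← Units.mul_inv_eq_iff_eq_mul]
    exact sub_eq_zero.mp (by rw [← h]; abel)
  rw [mulVec_mulVec, mulVec_mulVec, ← sub_mulVec, hxy, sub_mul, sub_sub_cancel_left, neg_mulVec,
    ← mulVec_mulVec, vecMulVec_mulVec, op_smul_eq_smul]
  exact neg_mem (smul_mem _ _ (mem_span_singleton_self i))

theorem nil_flag_exists_trigonometric (n : ℕ) (x : (Matrix (Fin n) (Fin n) ℂ)ˣ)
    (y : Matrix (Fin n) (Fin n) ℂ)
    (i : Fin n → ℂ) (j : Module.Dual ℂ (Fin n → ℂ))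
    (hmom : (x : Matrix (Fin n) (Fin n) ℂ) * y *
        ((x⁻¹ : (Matrix (Fin n) (Fin n) ℂ)ˣ) : Matrix (Fin n) (Fin n) ℂ) - y +
        Matrix.vecMulVec i (fun b => j (Pi.single b 1)) = 0)
    (hnil : IsNilpotent y) :
    ∃ V : ℕ → Submodule ℂ (Fin n → ℂ),
      V 0 = ⊥ ∧ V n = ⊤ ∧
      (∀ k, k < n → V k ≤ V (k + 1)) ∧
      (∀ k, k ≤ n → Module.finrank ℂ (V k) = k) ∧
      (∀ k, 1 ≤ k → k ≤ n →
        (V k).map ((x : Matrix (Fin n) (Fin n) ℂ).mulVecLin) = V k ∧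
        (∀ u ∈ V k, y.mulVec u ∈ V (k - 1))) := by
  obtain ⟨F, hF0, hFtop, hFmono, hFrank, hFx, hFy⟩ :=
    exists_flag_invtSubmodule (f := (x : Matrix (Fin n) (Fin n) ℂ).mulVecLin) (g := y.mulVecLin)
      ((isNilpotent_toLin'_iff y).mpr hnil) (mulVec_comm_mem_span_of_conj_sub_eq_vecMulVec hmom)
  rw [finrank_fin_fun] at hFtop hFrank
  refine ⟨F, hF0, hFtop, fun k _ ↦ hFmono k.le_succ, hFrank, fun k hk _ ↦ ⟨?_, fun u hu ↦ ?_⟩⟩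
  · exact map_eq_of_mem_invtSubmodule (mulVec_injective_of_isUnit x.isUnit) (hFx k)
  · obtain ⟨k, rfl⟩ := Nat.exists_eq_add_of_le' hk
    exact hFy k hu
end

section
/- Let n ≥ 1 and let 𝕆₀ := {(X, v) ∈ Mₙ(ℂ) × ℂⁿ : X is regular unipotent and v ∉ range(X − I)}. Then GLₙ(ℂ) acts simply transitively on 𝕆₀ via g·(X,v) = (gXg⁻¹, gv): for any two pairs (X,v), (X',v') ∈ 𝕆₀ there exists a unique g ∈ GLₙ(ℂ) with gXg⁻¹ = X' and gv = v'. (This is the description, used in the proof of Theorem 5.8, of the open GLₙ-orbit in 𝐔 × V°, on which the action is free and transitive.) -/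
/-! Put `N = X - 1`. Then `Nⁿ = 0 ≠ N^{n-1}`, so `N^{n-1} w ≠ 0` for some `w`, and `w, N w, …, N^{n-1} w`
are independent; hence `range N` (of dimension `≥ n - 1`) equals `ker N^{n-1}` (a proper subspace).
So `v ∉ range N` means `N^{n-1} v ≠ 0`, and `v, N v, …, N^{n-1} v` is a basis. Any `g` with
`g N = N' g` and `g v = v'` sends `N^i v` to `N'^i v'`, which determines `g`; conversely the linear
map doing this between the two bases intertwines `N` and `N'`. Finally `g X g⁻¹ = X'` iff
`g N = N' g`. -/

open Matrix

/-- `X` is regular unipotent: `(X − I)ⁿ = 0` and `(X − I)^{n−1} ≠ 0`. -/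
def IsRegUnipotent {n : ℕ} (X : Matrix (Fin n) (Fin n) ℂ) : Prop :=
  (X - 1) ^ n = 0 ∧ (X - 1) ^ (n - 1) ≠ 0

open Module LinearMap Submodule

namespace Module.End

variable {K V : Type*} [Field K] [AddCommGroup V] [Module K V] {n : ℕ} {f f' : End K V} {v v' : V}

theorem linearIndependent_pow_apply (hf : f ^ n = 0) (hv : (f ^ (n - 1)) v ≠ 0) :
    LinearIndependent K fun i : Fin n => (f ^ (i : ℕ)) v := by
  rw [Fintype.linearIndependent_iff]
  intro c hc i
  induction i using WellFoundedLT.induction with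
  | _ i ih =>
  -- `f ^ (n - 1 - i)` kills the terms above `i`, and those below vanish by induction
  have hkill : ∀ j ∈ Finset.univ, j ≠ i → (f ^ (n - 1 - i)) (c j • (f ^ (j : ℕ)) v) = 0 := by
    intro j _ hj
    rcases lt_or_gt_of_ne hj with hlt | hgt
    · simp [ih j hlt]
    · rw [map_smul, ← mul_apply, ← pow_add, pow_eq_zero_of_le (by omega) hf,
        LinearMap.zero_apply, smul_zero]
  have hi := congrArg (f ^ (n - 1 - i)) hc
  rw [map_sum, map_zero, Finset.sum_eq_single_of_mem i (Finset.mem_univ i) hkill, map_smul,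
    ← mul_apply, ← pow_add, Nat.sub_add_cancel (by omega : (i : ℕ) ≤ n - 1)] at hi
  exact (smul_eq_zero.mp hi).resolve_right hv

theorem range_eq_ker_pow_pred [FiniteDimensional K V] (hV : finrank K V = n) (hf : f ^ n = 0)
    (hf' : f ^ (n - 1) ≠ 0) : range f = ker (f ^ (n - 1)) := by
  obtain ⟨m, rfl⟩ : ∃ m, n = m + 1 := Nat.exists_eq_succ_of_ne_zero (by rintro rfl; exact hf' hf)
  rw [Nat.add_sub_cancel] at hf' ⊢
  have hle : range f ≤ ker (f ^ m) := by
    rintro _ ⟨u, rfl⟩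
    rw [mem_ker, ← mul_apply, ← pow_succ, hf, LinearMap.zero_apply]
  obtain ⟨w, hw⟩ : ∃ w, (f ^ m) w ≠ 0 := by
    by_contra! h
    exact hf' (LinearMap.ext h)
  have hli := (linearIndependent_pow_apply hf hw).comp Fin.succ (Fin.succ_injective _)
  refine eq_of_le_of_finrank_le hle ?_
  calc finrank K (ker (f ^ m)) ≤ m :=
        Nat.lt_succ_iff.mp (hV ▸ finrank_lt (mt ker_eq_top.mp hf') :)
    _ = finrank K (span K (Set.range ((fun i : Fin (m + 1) => (f ^ (i : ℕ)) w) ∘ Fin.succ))) := by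
        rw [finrank_span_eq_card hli, Fintype.card_fin]
    _ ≤ finrank K (range f) := by
        refine finrank_mono (span_le.mpr (Set.range_subset_iff.mpr fun i => ⟨(f ^ (i : ℕ)) w, ?_⟩))
        simp [pow_succ']

theorem pow_pred_apply_ne_zero_of_notMem_range [FiniteDimensional K V] (hV : finrank K V = n)
    (hf : f ^ n = 0) (hf' : f ^ (n - 1) ≠ 0) (hv : v ∉ range f) : (f ^ (n - 1)) v ≠ 0 :=
  fun h => hv (range_eq_ker_pow_pred hV hf hf' ▸ h)

noncomputable def cyclicBasis [FiniteDimensional K V] (hV : finrank K V = n) (hf : f ^ n = 0)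
    (hv : (f ^ (n - 1)) v ≠ 0) : Basis (Fin n) K V :=
  basisOfLinearIndependentOfCardEqFinrank' _ (linearIndependent_pow_apply hf hv)
    (by rw [Fintype.card_fin, hV])

@[simp]
theorem cyclicBasis_apply [FiniteDimensional K V] (hV : finrank K V = n) (hf : f ^ n = 0)
    (hv : (f ^ (n - 1)) v ≠ 0) (i : Fin n) : cyclicBasis hV hf hv i = (f ^ (i : ℕ)) v := by
  simp [cyclicBasis]

theorem apply_pow_apply_of_semiconjBy {u : End K V} (hu : SemiconjBy u f f') (k : ℕ) (x : V) :
    u ((f ^ k) x) = (f' ^ k) (u x) :=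
  LinearMap.congr_fun (hu.pow_right k) x

theorem existsUnique_semiconjBy_apply_eq [FiniteDimensional K V] (hV : finrank K V = n)
    (hf : f ^ n = 0) (hv : (f ^ (n - 1)) v ≠ 0) (hf' : f' ^ n = 0) (hv' : (f' ^ (n - 1)) v' ≠ 0) :
    ∃! g : (End K V)ˣ, SemiconjBy (g : End K V) f f' ∧ (g : End K V) v = v' := by
  set b := cyclicBasis hV hf hv
  set b' := cyclicBasis hV hf' hv'
  have hbasis : ∀ u : End K V, SemiconjBy u f f' → u v = v' → ∀ i, u (b i) = b' i := by
    intro u hu huv i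
    rw [cyclicBasis_apply, cyclicBasis_apply, apply_pow_apply_of_semiconjBy hu, huv]
  set e := b.equiv b' (Equiv.refl _)
  have he : ∀ k : ℕ, e ((f ^ k) v) = (f' ^ k) v' := by
    intro k
    rcases lt_or_ge k n with hk | hk
    · simpa [b, b'] using b.equiv_apply ⟨k, hk⟩ b' (Equiv.refl _)
    · simp [pow_eq_zero_of_le hk hf, pow_eq_zero_of_le hk hf']
  refine ⟨GeneralLinearGroup.ofLinearEquiv e, ⟨b.ext fun i => ?_, by simpa using he 0⟩,
    fun g ⟨hg, hgv⟩ => Units.ext (b.ext fun i => ?_)⟩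
  · change e (f (b i)) = f' (e (b i))
    rw [cyclicBasis_apply, ← mul_apply, ← pow_succ', he, he, pow_succ', mul_apply]
  · rw [hbasis _ hg hgv]
    exact (b.equiv_apply i b' (Equiv.refl _)).symm

end Module.End

theorem Units.mul_mul_inv_eq_iff_semiconjBy_sub_one {R : Type*} [Ring R] (g : Rˣ) (x y : R) :
    g * x * ↑g⁻¹ = y ↔ SemiconjBy (g : R) (x - 1) (y - 1) := by
  rw [Units.mul_inv_eq_iff_eq_mul, SemiconjBy, mul_sub, sub_mul, mul_one, one_mul, sub_left_inj]

namespace IsRegUnipotent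

variable {n : ℕ} {X : Matrix (Fin n) (Fin n) ℂ}

theorem pow_toLinAlgEquiv'_sub_one (hX : IsRegUnipotent X) : toLinAlgEquiv' (X - 1) ^ n = 0 := by
  rw [← map_pow, hX.1, map_zero]

theorem pow_pred_toLinAlgEquiv'_sub_one_apply_ne_zero (hX : IsRegUnipotent X) {v : Fin n → ℂ}
    (hv : ∀ u, (X - 1) *ᵥ u ≠ v) : (toLinAlgEquiv' (X - 1) ^ (n - 1)) v ≠ 0 := by
  refine End.pow_pred_apply_ne_zero_of_notMem_range (finrank_fin_fun ℂ)
    hX.pow_toLinAlgEquiv'_sub_one ?_ ?_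
  · rw [← map_pow]
    exact (map_ne_zero_iff _ toLinAlgEquiv'.injective).mpr hX.2
  · rintro ⟨u, hu⟩
    exact hv u (by rwa [toLinAlgEquiv'_apply] at hu)

end IsRegUnipotent

theorem open_orbit_simply_transitive_general (n : ℕ)
    (X X' : Matrix (Fin n) (Fin n) ℂ) (v v' : Fin n → ℂ)
    (hX : IsRegUnipotent X) (hv : ∀ u, (X - 1).mulVec u ≠ v)
    (hX' : IsRegUnipotent X') (hv' : ∀ u, (X' - 1).mulVec u ≠ v') :
    ∃! g : (Matrix (Fin n) (Fin n) ℂ)ˣ,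
      (g : Matrix (Fin n) (Fin n) ℂ) * X *
          ((g⁻¹ : (Matrix (Fin n) (Fin n) ℂ)ˣ) : Matrix (Fin n) (Fin n) ℂ) = X' ∧
      (g : Matrix (Fin n) (Fin n) ℂ).mulVec v = v' := by
  refine (Matrix.GeneralLinearGroup.toLin.toEquiv.existsUnique_congr fun g => ?_).mpr
    (End.existsUnique_semiconjBy_apply_eq (finrank_fin_fun ℂ) hX.pow_toLinAlgEquiv'_sub_one
      (hX.pow_pred_toLinAlgEquiv'_sub_one_apply_ne_zero hv) hX'.pow_toLinAlgEquiv'_sub_one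
      (hX'.pow_pred_toLinAlgEquiv'_sub_one_apply_ne_zero hv'))
  rw [Units.mul_mul_inv_eq_iff_semiconjBy_sub_one, SemiconjBy, SemiconjBy,
    ← toLinAlgEquiv'.injective.eq_iff, map_mul, map_mul]
  -- `↑(toLin g) = toLinAlgEquiv' ↑g` and `toLinAlgEquiv' ↑g v = ↑g *ᵥ v` hold by definition
  rfl

theorem open_orbit_simply_transitive (n : ℕ) (hn : 1 ≤ n)
    (X X' : Matrix (Fin n) (Fin n) ℂ) (v v' : Fin n → ℂ)
    (hX : IsRegUnipotent X) (hv : ∀ u, (X - 1).mulVec u ≠ v)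
    (hX' : IsRegUnipotent X') (hv' : ∀ u, (X' - 1).mulVec u ≠ v') :
    ∃! g : (Matrix (Fin n) (Fin n) ℂ)ˣ,
      (g : Matrix (Fin n) (Fin n) ℂ) * X *
          ((g⁻¹ : (Matrix (Fin n) (Fin n) ℂ)ˣ) : Matrix (Fin n) (Fin n) ℂ) = X' ∧
      (g : Matrix (Fin n) (Fin n) ℂ).mulVec v = v' :=
  open_orbit_simply_transitive_general n X X' v v' hX hv hX' hv'
end

section
/- Let g ∈ Mₙ(ℂ) have n pairwise distinct eigenvalues, let v ∈ ℂⁿ be nonzero, and let m := dim span{g^k v : k ≥ 0} (the dimension of the smallest g-invariant subspace containing v). Then the set of complete flags 0 = V₀ ⊆ V₁ ⊆ ⋯ ⊆ Vₙ = ℂⁿ satisfying g V_k ⊆ V_k for all k and v ∈ V_m is finite of cardinality exactly m! · (n−m)!. (This is the fiber count underlying Proposition 5.5(ii): over the regular locus, π_{n,m} : X̃_{n,m} → X_{n,m} is a Galois covering with Galois group 𝕊_m × 𝕊_{n−m}.) -/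
/-!
Diagonalise `g` in an eigenbasis `B`. Since the eigenvalues are distinct, a polynomial in `g`
isolates each eigencomponent, so a `g`-invariant subspace is spanned by the basis vectors it
contains. Hence the complete invariant flags are exactly the flags spanned by the initial segments
of the orderings of `B`, distinct orderings giving distinct flags. If `S` is the support of `v`
in `B`, the cyclic subspace of `v` is spanned by `B '' S`, so `m = #S`, and `v ∈ V m` says that
the first `m` vectors of the ordering are those indexed by `S`: there are `m! (n - m)!` such
orderings.
-/

open Module Submodule Polynomial

theorem Fintype.card_equiv_comp_eq {α β γ : Type*} [Fintype α] [Fintype β] [Fintype γ]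
    [DecidableEq α] [DecidableEq β] [DecidableEq γ] (p : α → γ) (q : β → γ)
    (h : ∀ c, Fintype.card {a // p a = c} = Fintype.card {b // q b = c}) :
    Fintype.card {σ : α ≃ β // q ∘ σ = p} = ∏ c, (Fintype.card {a // p a = c}).factorial := by
  -- composing with one such `τ` identifies these equivalences with the permutations fixing `p`
  set τ : α ≃ β := Equiv.ofFiberEquiv fun c => Fintype.equivOfCardEq (h c)
  have hτ : q ∘ τ = p := funext (Equiv.ofFiberEquiv_map _)
  rw [← DomMulAct.stabilizer_card p]
  refine Fintype.card_congr (Equiv.subtypeEquiv ((Equiv.refl α).equivCongr τ.symm) fun σ => ?_)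
  rw [← hτ]
  simp [funext_iff]

theorem Fintype.card_subtype_decide_mem_eq {ι : Type*} [Fintype ι] [DecidableEq ι]
    (S : Finset ι) (c : Bool) :
    Fintype.card {i : ι // decide (i ∈ S) = c} = if c then S.card else Fintype.card ι - S.card := by
  cases c <;> simp [Fintype.card_subtype_compl]

theorem Fin.card_subtype_decide_val_lt_eq {n m : ℕ} (hm : m ≤ n) (c : Bool) :
    Fintype.card {j : Fin n // decide ((j : ℕ) < m) = c} = if c then m else n - m := by
  cases c
  · simp only [← Bool.not_eq_true, Fintype.card_subtype_compl]
    simp [Fintype.card_subtype, Fin.card_filter_val_lt, hm]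
  · simp [Fintype.card_subtype, Fin.card_filter_val_lt, hm]

theorem Equiv.ncard_setOf_val_lt {ι : Type*} {n : ℕ} (r : ι ≃ Fin n) {k : ℕ} (hk : k ≤ n) :
    {i | (r i : ℕ) < k}.ncard = k := by
  rw [show {i | (r i : ℕ) < k} = r ⁻¹' {j | (j : ℕ) < k} from rfl,
    Set.ncard_preimage_of_injective_subset_range r.injective (by simp),
    Set.ncard_eq_toFinset_card', Set.toFinset_ofPred, Fin.card_filter_val_lt, min_eq_right hk]

theorem Set.exists_equiv_fin_of_monotone_of_ncard_eq {ι : Type*} [Finite ι] {n : ℕ}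
    (hι : Nat.card ι = n) {T : ℕ → Set ι} (hT : Monotone T) (hcard : ∀ k ≤ n, (T k).ncard = k) :
    ∃ r : ι ≃ Fin n, ∀ k, T k = {i | (r i : ℕ) < k} := by
  classical
  have hTn : T n = Set.univ :=
    Set.eq_of_subset_of_ncard_le (Set.subset_univ _) (by rw [Set.ncard_univ, hcard n le_rfl, hι])
  have hex (i : ι) : ∃ k, i ∈ T (k + 1) := ⟨n, hT n.le_succ (hTn ▸ trivial)⟩
  -- the rank of `i` is the step at which it enters the chain
  set rk : ι → ℕ := fun i => Nat.find (hex i)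
  have hmem (k : ℕ) (i : ι) : i ∈ T k ↔ rk i < k := by
    refine ⟨fun hi => ?_, fun hi => hT hi (Nat.find_spec (hex i))⟩
    obtain _ | k := k
    · simp [(Set.ncard_eq_zero (s := T 0)).mp (hcard 0 (Nat.zero_le n))] at hi
    · exact Nat.lt_succ_of_le (Nat.find_le hi)
  have hlt (i : ι) : rk i < n := (hmem n i).mp (hTn ▸ trivial)
  have hinj : Function.Injective rk := by
    intro i j hij
    have hstep : (T (rk i + 1) \ T (rk i)).ncard = 1 := by
      rw [Set.ncard_sdiff (hT (rk i).le_succ), hcard _ (hlt i), hcard _ (hlt i).le]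
      omega
    have hdiff (j : ι) (hj : rk j = rk i) : j ∈ T (rk i + 1) \ T (rk i) := by
      simp [hmem, hj]
    obtain ⟨a, ha⟩ := Set.ncard_eq_one.mp hstep
    have hi := hdiff i rfl
    have hj := hdiff j hij.symm
    rw [ha] at hi hj
    exact hi.trans hj.symm
  set r₀ : ι → Fin n := fun i => ⟨rk i, hlt i⟩
  have hr₀ : Function.Injective r₀ := fun i j h => hinj (Fin.mk.inj_iff.mp h)
  exact ⟨Equiv.ofBijective r₀ (hr₀.bijective_of_nat_card_le (by simp [hι])),
    fun k => Set.ext fun i => hmem k i⟩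

theorem Module.End.aeval_apply_mem_of_mem_invtSubmodule {R M : Type*} [CommRing R]
    [AddCommGroup M] [Module R M] {f : End R M} {W : Submodule R M} (hW : W ∈ f.invtSubmodule)
    (q : R[X]) {x : M} (hx : x ∈ W) : aeval f q x ∈ W := by
  induction q using Polynomial.induction_on' with
  | add p q hp hq => simpa using add_mem hp hq
  | monomial k a =>
    simpa [aeval_monomial] using W.smul_mem a
      (End.pow_apply_mem_of_forall_mem k ((f.mem_invtSubmodule_iff_forall_mem_of_mem).mp hW) x hx)

theorem Module.End.exists_basis_eigenvectors_of_card_roots_charpoly {K M : Type*} [Field K]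
    [DecidableEq K] [AddCommGroup M] [Module K M] [FiniteDimensional K M] (f : End K M)
    (h : f.charpoly.roots.toFinset.card = finrank K M) :
    ∃ B : Basis f.charpoly.roots.toFinset K M, ∀ i, f (B i) = (i : K) • B i := by
  have hev (i : f.charpoly.roots.toFinset) : f.HasEigenvalue i :=
    (f.hasEigenvalue_iff_isRoot_charpoly _).mpr
      (isRoot_of_mem_roots (Multiset.mem_toFinset.mp i.2))
  choose w hw using fun i => (hev i).exists_hasEigenvector
  have hli := f.eigenvectors_linearIndependent' (fun i : f.charpoly.roots.toFinset => (i : K))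
    Subtype.coe_injective w hw
  refine ⟨basisOfLinearIndependentOfCardEqFinrank' w hli (by simpa using h), fun i => ?_⟩
  simpa using (hw i).apply_eq_smul

def Module.End.invtCompleteFlags {K M : Type*} [Field K] [AddCommGroup M] [Module K M]
    (f : End K M) (n : ℕ) : Set (ℕ → Submodule K M) :=
  {V | Monotone V ∧ (∀ k ≤ n, finrank K (V k) = k) ∧ ∀ k, V k ∈ f.invtSubmodule}

namespace Module.Basis

variable {K M ι : Type*} [Field K] [AddCommGroup M] [Module K M]
  {f : End K M} {μ : ι → K} {B : Basis ι K M} {n : ℕ}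

theorem span_image_mem_invtSubmodule (hB : ∀ i, f (B i) = μ i • B i) (s : Set ι) :
    span K (B '' s) ∈ f.invtSubmodule := by
  rw [End.mem_invtSubmodule_iff_map_le, map_span, span_le]
  rintro _ ⟨_, ⟨i, hi, rfl⟩, rfl⟩
  rw [hB]
  exact smul_mem _ _ (subset_span ⟨i, hi, rfl⟩)

theorem mem_of_repr_ne_zero_of_mem_invtSubmodule (hB : ∀ i, f (B i) = μ i • B i)
    (hμ : Function.Injective μ) {W : Submodule K M} (hW : W ∈ f.invtSubmodule) {x : M}
    (hx : x ∈ W) {i : ι} (hi : B.repr x i ≠ 0) : B i ∈ W := by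
  classical
  -- `q (f)` kills the other eigencomponents of `x` and rescales the `i`-th one
  set q : K[X] := ∏ j ∈ (B.repr x).support.erase i, (X - C (μ j))
  have hq_eval : ∀ j ∈ (B.repr x).support, q.eval (μ j) = 0 ↔ j ≠ i := by
    intro j hj
    simp [q, eval_prod, Finset.prod_eq_zero_iff, sub_eq_zero, hμ.eq_iff,
      Finsupp.mem_support_iff.mp hj]
  have haeval (j : ι) : aeval f q (B j) = q.eval (μ j) • B j :=
    End.aeval_apply_of_hasEigenvector
      (End.hasEigenvector_iff.mpr ⟨End.mem_eigenspace_iff.mpr (hB j), B.ne_zero j⟩)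
  have hqx : aeval f q x = (B.repr x i * q.eval (μ i)) • B i := by
    conv_lhs => rw [← B.linearCombination_repr x, Finsupp.linearCombination_apply, Finsupp.sum,
      map_sum]
    rw [Finset.sum_eq_single i]
    · rw [map_smul, haeval, smul_smul]
    · intro j hj hji
      rw [map_smul, haeval, (hq_eval j hj).mpr hji, zero_smul, smul_zero]
    · exact fun h => absurd (Finsupp.mem_support_iff.mpr hi) h
  have hc : B.repr x i * q.eval (μ i) ≠ 0 :=
    mul_ne_zero hi fun h => (hq_eval i (Finsupp.mem_support_iff.mpr hi)).mp h rfl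
  have := W.smul_mem (B.repr x i * q.eval (μ i))⁻¹
    (End.aeval_apply_mem_of_mem_invtSubmodule hW q hx)
  rwa [hqx, smul_smul, inv_mul_cancel₀ hc, one_smul] at this

theorem eq_span_image_of_mem_invtSubmodule (hB : ∀ i, f (B i) = μ i • B i)
    (hμ : Function.Injective μ) {W : Submodule K M} (hW : W ∈ f.invtSubmodule) :
    W = span K (B '' {i | B i ∈ W}) :=
  le_antisymm
    (fun _ hx => B.mem_span_image.mpr fun _ hi =>
      B.mem_of_repr_ne_zero_of_mem_invtSubmodule hB hμ hW hx (Finsupp.mem_support_iff.mp hi))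
    (span_le.mpr (by rintro _ ⟨i, hi, rfl⟩; exact hi))

theorem span_range_pow_apply_eq (hB : ∀ i, f (B i) = μ i • B i) (hμ : Function.Injective μ)
    (v : M) : span K (Set.range fun k : ℕ => (f ^ k) v) = span K (B '' (B.repr v).support) := by
  have hinv : span K (Set.range fun k : ℕ => (f ^ k) v) ∈ f.invtSubmodule := by
    rw [End.mem_invtSubmodule_iff_map_le, map_span, span_le]
    rintro _ ⟨_, ⟨k, rfl⟩, rfl⟩
    exact subset_span ⟨k + 1, by simp only [pow_succ', End.mul_apply]⟩
  refine le_antisymm (span_le.mpr ?_) (span_le.mpr ?_)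
  · rintro _ ⟨k, rfl⟩
    exact End.pow_apply_mem_of_forall_mem k
      ((f.mem_invtSubmodule_iff_forall_mem_of_mem).mp (span_image_mem_invtSubmodule hB _)) v
      (B.mem_span_image.mpr subset_rfl)
  · rintro _ ⟨i, hi, rfl⟩
    exact B.mem_of_repr_ne_zero_of_mem_invtSubmodule hB hμ hinv (subset_span ⟨0, by simp⟩)
      (Finsupp.mem_support_iff.mp hi)

theorem finrank_span_image [Finite ι] (s : Set ι) :
    finrank K (span K (B '' s)) = s.ncard := by
  have := Fintype.ofFinite s
  rw [Set.image_eq_range, ← Nat.card_coe_set_eq, Nat.card_eq_fintype_card]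
  exact finrank_span_eq_card (B.linearIndependent.comp _ Subtype.val_injective)

variable (B) in
def rankFlag (r : ι ≃ Fin n) (k : ℕ) : Submodule K M :=
  span K (B '' {i | (r i : ℕ) < k})

theorem self_mem_rankFlag_iff {r : ι ≃ Fin n} {i : ι} {k : ℕ} :
    B i ∈ B.rankFlag r k ↔ (r i : ℕ) < k :=
  B.self_mem_span_image

theorem mem_rankFlag_iff {r : ι ≃ Fin n} {v : M} {k : ℕ} :
    v ∈ B.rankFlag r k ↔ ∀ i ∈ (B.repr v).support, (r i : ℕ) < k :=
  B.mem_span_image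

theorem rankFlag_injective : Function.Injective (B.rankFlag (n := n)) := by
  have hle {r r' : ι ≃ Fin n} (h : B.rankFlag r = B.rankFlag r') (i : ι) : (r i : ℕ) ≤ r' i := by
    have hi : B i ∈ B.rankFlag r' (r' i + 1) := self_mem_rankFlag_iff.mpr (Nat.lt_succ_self _)
    rw [← h] at hi
    exact Nat.lt_succ_iff.mp (self_mem_rankFlag_iff.mp hi)
  intro r r' h
  ext i
  exact le_antisymm (hle h i) (hle h.symm i)

theorem rankFlag_mem_invtCompleteFlags [Finite ι] (hB : ∀ i, f (B i) = μ i • B i)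
    (r : ι ≃ Fin n) : B.rankFlag r ∈ f.invtCompleteFlags n :=
  ⟨fun _ _ hab => span_mono (Set.image_mono fun _ hi => lt_of_lt_of_le hi hab),
    fun _ hk => by rw [rankFlag, finrank_span_image, r.ncard_setOf_val_lt hk],
    fun _ => span_image_mem_invtSubmodule hB _⟩

theorem exists_rankFlag_eq [Finite ι] (hB : ∀ i, f (B i) = μ i • B i)
    (hμ : Function.Injective μ) (hι : Nat.card ι = n) {V : ℕ → Submodule K M}
    (hV : V ∈ f.invtCompleteFlags n) : ∃ r : ι ≃ Fin n, B.rankFlag r = V := by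
  obtain ⟨hmono, hrank, hinv⟩ := hV
  have hV_eq (k : ℕ) : V k = span K (B '' {i | B i ∈ V k}) :=
    eq_span_image_of_mem_invtSubmodule hB hμ (hinv k)
  obtain ⟨r, hr⟩ := Set.exists_equiv_fin_of_monotone_of_ncard_eq hι (T := fun k => {i | B i ∈ V k})
    (fun _ _ hab _ hi => hmono hab hi)
    (fun k hk => by rw [← finrank_span_image (B := B), ← hV_eq, hrank k hk])
  exact ⟨r, funext fun k => by rw [hV_eq k, hr k, rankFlag]⟩

variable [Fintype ι] [DecidableEq ι]

theorem setOf_mem_invtCompleteFlags_eq_image (hB : ∀ i, f (B i) = μ i • B i)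
    (hμ : Function.Injective μ) (hι : Fintype.card ι = n) (v : M) :
    {V ∈ f.invtCompleteFlags n | v ∈ V (B.repr v).support.card} =
      B.rankFlag '' {r | (fun j : Fin n => decide ((j : ℕ) < (B.repr v).support.card)) ∘ r =
        fun i => decide (i ∈ (B.repr v).support)} := by
  set S := (B.repr v).support
  have hS : S.card ≤ n := hι ▸ S.card_le_univ
  have hsupp (r : ι ≃ Fin n) (h : ∀ i ∈ S, (r i : ℕ) < S.card) :
      {i | (r i : ℕ) < S.card} = ↑S :=
    (Set.eq_of_subset_of_ncard_le (s := ↑S) (t := {i | (r i : ℕ) < S.card}) (fun i hi => h i hi)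
      (by rw [r.ncard_setOf_val_lt hS, Set.ncard_coe_finset])).symm
  ext V
  constructor
  · rintro ⟨hV, hv⟩
    obtain ⟨r, rfl⟩ := exists_rankFlag_eq hB hμ (by rw [Nat.card_eq_fintype_card, hι]) hV
    exact ⟨r, funext fun i =>
      decide_eq_decide.mpr (Set.ext_iff.mp (hsupp r (mem_rankFlag_iff.mp hv)) i), rfl⟩
  · rintro ⟨r, hr, rfl⟩
    exact ⟨rankFlag_mem_invtCompleteFlags hB r,
      mem_rankFlag_iff.mpr fun i => (decide_eq_decide.mp (congrFun hr i)).mpr⟩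

theorem finite_and_ncard_setOf_mem_invtCompleteFlags (hB : ∀ i, f (B i) = μ i • B i)
    (hμ : Function.Injective μ) (hι : Fintype.card ι = n) (v : M) :
    {V ∈ f.invtCompleteFlags n | v ∈ V (B.repr v).support.card}.Finite ∧
      {V ∈ f.invtCompleteFlags n | v ∈ V (B.repr v).support.card}.ncard =
        (B.repr v).support.card.factorial * (n - (B.repr v).support.card).factorial := by
  have hS : (B.repr v).support.card ≤ n := hι ▸ (B.repr v).support.card_le_univ
  rw [setOf_mem_invtCompleteFlags_eq_image hB hμ hι]
  refine ⟨(Set.toFinite _).image _, ?_⟩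
  rw [Set.ncard_image_of_injective _ rankFlag_injective, ← Nat.card_coe_set_eq, Set.coe_ofPred,
    Nat.card_eq_fintype_card, Fintype.card_equiv_comp_eq _ _ fun c => by
      rw [Fintype.card_subtype_decide_mem_eq, Fin.card_subtype_decide_val_lt_eq hS, hι],
    Fintype.prod_bool, Fintype.card_subtype_decide_mem_eq, Fintype.card_subtype_decide_mem_eq, hι]
  simp

end Module.Basis

theorem flag_fiber_count_general (n : ℕ) (g : Matrix (Fin n) (Fin n) ℂ)
    (hg : g.charpoly.roots.toFinset.card = n)
    (v : Fin n → ℂ) (m : ℕ)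
    (hm : m = Module.finrank ℂ
      (Submodule.span ℂ (Set.range fun k : ℕ => (g ^ k).mulVec v))) :
    {V : ℕ → Submodule ℂ (Fin n → ℂ) |
        Monotone V ∧ (∀ k, k ≤ n → Module.finrank ℂ (V k) = k) ∧
        (∀ k, ∀ u ∈ V k, g.mulVec u ∈ V k) ∧ v ∈ V m}.Finite ∧
    {V : ℕ → Submodule ℂ (Fin n → ℂ) |
        Monotone V ∧ (∀ k, k ≤ n → Module.finrank ℂ (V k) = k) ∧
        (∀ k, ∀ u ∈ V k, g.mulVec u ∈ V k) ∧ v ∈ V m}.ncard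
      = m.factorial * (n - m).factorial := by
  obtain ⟨B, hB⟩ := End.exists_basis_eigenvectors_of_card_roots_charpoly (Matrix.toLin' g)
    (by rw [Matrix.charpoly_toLin', hg, Module.finrank_fin_fun])
  have hι : Fintype.card (Matrix.toLin' g).charpoly.roots.toFinset = n := by
    rw [Fintype.card_coe, Matrix.charpoly_toLin', hg]
  have hpow : (Set.range fun k : ℕ => (g ^ k).mulVec v) =
      Set.range fun k : ℕ => (Matrix.toLin' g ^ k) v := by
    simp only [← Matrix.toLin'_pow, Matrix.toLin'_apply]
  have hm' : m = (B.repr v).support.card := by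
    rw [hm, hpow, B.span_range_pow_apply_eq hB Subtype.coe_injective, B.finrank_span_image,
      Set.ncard_coe_finset]
  have hflags : {V : ℕ → Submodule ℂ (Fin n → ℂ) |
      Monotone V ∧ (∀ k, k ≤ n → Module.finrank ℂ (V k) = k) ∧
      (∀ k, ∀ u ∈ V k, g.mulVec u ∈ V k) ∧ v ∈ V m} =
      {V ∈ End.invtCompleteFlags (Matrix.toLin' g) n | v ∈ V m} := by
    simp [End.invtCompleteFlags, End.mem_invtSubmodule_iff_forall_mem_of_mem, and_assoc]
  rw [hflags, hm']
  exact B.finite_and_ncard_setOf_mem_invtCompleteFlags hB Subtype.coe_injective hι v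

theorem flag_fiber_count (n : ℕ) (g : Matrix (Fin n) (Fin n) ℂ)
    (hg : g.charpoly.roots.toFinset.card = n)
    (v : Fin n → ℂ) (hv : v ≠ 0) (m : ℕ)
    (hm : m = Module.finrank ℂ
      (Submodule.span ℂ (Set.range fun k : ℕ => (g ^ k).mulVec v))) :
    {V : ℕ → Submodule ℂ (Fin n → ℂ) |
        Monotone V ∧ (∀ k, k ≤ n → Module.finrank ℂ (V k) = k) ∧
        (∀ k, ∀ u ∈ V k, g.mulVec u ∈ V k) ∧ v ∈ V m}.Finite ∧
    {V : ℕ → Submodule ℂ (Fin n → ℂ) |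
        Monotone V ∧ (∀ k, k ≤ n → Module.finrank ℂ (V k) = k) ∧
        (∀ k, ∀ u ∈ V k, g.mulVec u ∈ V k) ∧ v ∈ V m}.ncard
      = m.factorial * (n - m).factorial :=
  flag_fiber_count_general n g hg v m hm
end
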